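/- arXiv:1705.09031 — 3 statements merged into one kernel-verified Lean document; each statement's English description precedes it below -/
import Mathlib

section
/- Under the assumptions of the previous lemma (vertices in M are not ancestors of O ∪ S nor of each other, and S_l \ S_t ⊆ M with S_t ⊆ S_l): if W is a minimal d-separating set for O_i and O_j relative to S_t (i.e., O_i ⊥_d O_j | W ∪ S_t but O_i and O_j are d-connected given A ∪ S_t for every proper subset A ⊊ W), and additionally O_i ⊥_d O_j | W ∪ S_l, then W is also a minimal d-separating set for O_i and O_j relative to S_l (i.e., O_i and O_j are d-connected given A ∪ S_l for every proper subset A ⊊ W). -/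
variable {V : Type*}

/-- `Ancestor E x y`: there is a (possibly trivial) directed path from `x` to `y`. -/
def Ancestor (E : V → V → Prop) (x y : V) : Prop :=
  Relation.ReflTransGen E x y

/-- A directed graph is acyclic (a DAG) if it has no directed cycles. -/
def Acyclic (E : V → V → Prop) : Prop :=
  ∀ v : V, ¬ Relation.TransGen E v v

/-- `v` is a collider on the path (vertex list) `l`. -/
def ColliderOn (E : V → V → Prop) (l : List V) (v : V) : Prop :=
  ∃ x y : V, [x, v, y] <:+: l ∧ E x v ∧ E y v

/-- `v` is an interior non-collider on the path `l`. -/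
def NonColliderOn (E : V → V → Prop) (l : List V) (v : V) : Prop :=
  (∃ x y : V, [x, v, y] <:+: l) ∧ ¬ ColliderOn E l v

/-- `l` is a path between `a` and `b` that is active given the conditioning set `C`:
every collider on `l` has a descendant in `C` and no non-collider on `l` is in `C`. -/
def ActivePath (E : V → V → Prop) (C : Set V) (a b : V) (l : List V) : Prop :=
  l.head? = some a ∧ l.getLast? = some b ∧ l.Nodup ∧
  l.Chain' (fun u v => E u v ∨ E v u) ∧
  (∀ v, ColliderOn E l v → ∃ d ∈ C, Ancestor E v d) ∧
  (∀ v, NonColliderOn E l v → v ∉ C)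

/-- `a` and `b` are d-connected given `C`. -/
def DConn (E : V → V → Prop) (C : Set V) (a b : V) : Prop :=
  ∃ l : List V, ActivePath E C a b l

/-- `a` and `b` are d-separated given `C`. -/
def DSep (E : V → V → Prop) (C : Set V) (a b : V) : Prop :=
  ¬ DConn E C a b

/-!
A non-collider `v` of a path is a strict ancestor of an endpoint or of a collider: follow the
edge leaving `v` along the path until the direction first turns around (a collider) or the path
ends. Hence, if every collider has a descendant in `C`, then `v` is a strict ancestor of an
endpoint or of a vertex of `C`. Enlarging the conditioning set by vertices that are strict
ancestors of neither keeps every active path active. The vertices of `Sl \ St` lie in `M`, so they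
are strict ancestors of no vertex of `O ∪ S`, nor, by acyclicity, of any vertex of `M`.
-/

open Relation

section Paths

variable {E : V → V → Prop}

lemma ColliderOn.of_reverse {l : List V} {c : V} (h : ColliderOn E l.reverse c) :
    ColliderOn E l c := by
  obtain ⟨x, y, hinf, hx, hy⟩ := h
  refine ⟨y, x, ?_, hy, hx⟩
  simpa using List.reverse_infix.mpr hinf

lemma exists_transGen_getLast_or_colliderOn {l : List V}
    (hch : l.IsChain (fun u v => E u v ∨ E v u)) :
    ∀ {t : List V} {u v : V}, (u :: v :: t) <:+ l → E u v →
      ∃ c, TransGen E u c ∧ (l.getLast? = some c ∨ ColliderOn E l c)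
  | [], u, v, hsuf, huv => by
    obtain ⟨p, rfl⟩ := hsuf
    exact ⟨v, .single huv, Or.inl (by simp)⟩
  | w :: t, u, v, hsuf, huv => by
    have hvw : E v w ∨ E w v :=
      (List.isChain_cons_cons.mp (List.isChain_cons_cons.mp (hch.suffix hsuf)).2).1
    rcases hvw with hvw | hwv
    · obtain ⟨c, hvc, hc⟩ :=
        exists_transGen_getLast_or_colliderOn hch ((List.suffix_cons u _).trans hsuf) hvw
      exact ⟨c, .head huv hvc, hc⟩
    · exact ⟨v, .single huv, Or.inr ⟨u, w, (List.prefix_append [u, v, w] t).isInfix.trans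
        hsuf.isInfix, huv, hwv⟩⟩

lemma NonColliderOn.exists_transGen {l : List V} {a b v : V}
    (hch : l.IsChain (fun u v => E u v ∨ E v u))
    (hhead : l.head? = some a) (hlast : l.getLast? = some b) (hv : NonColliderOn E l v) :
    ∃ c, TransGen E v c ∧ (c = a ∨ c = b ∨ ColliderOn E l c) := by
  obtain ⟨⟨x, y, s, t, hl⟩, hncol⟩ := hv
  have hxvy : [x, v, y].IsChain (fun u v => E u v ∨ E v u) := hch.infix ⟨s, t, hl⟩
  have hout : E v y ∨ E v x := by
    rcases List.isChain_cons_cons.mp hxvy with ⟨hx | hx, hvy⟩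
    · rcases (List.isChain_cons_cons.mp hvy).1 with hy | hy
      · exact Or.inl hy
      · exact absurd ⟨x, y, ⟨s, t, hl⟩, hx, hy⟩ hncol
    · exact Or.inr hx
  rcases hout with hvy | hvx
  · obtain ⟨c, hvc, hc⟩ := exists_transGen_getLast_or_colliderOn hch
      (t := t) ⟨s ++ [x], by simpa using hl⟩ hvy
    rw [hlast, Option.some_inj] at hc
    exact ⟨c, hvc, Or.inr (hc.imp Eq.symm id)⟩
  · have hchr : l.reverse.IsChain (fun u v => E u v ∨ E v u) :=
      List.isChain_reverse.mpr (hch.imp fun _ _ h => h.symm)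
    obtain ⟨c, hvc, hc⟩ := exists_transGen_getLast_or_colliderOn hchr
      (t := s.reverse) ⟨t.reverse ++ [y], by simp [← hl]⟩ hvx
    rw [List.getLast?_reverse, hhead, Option.some_inj] at hc
    exact ⟨c, hvc, hc.imp Eq.symm (fun h => Or.inr h.of_reverse)⟩

lemma ActivePath.mono {C C' : Set V} {a b : V} {l : List V} (hl : ActivePath E C a b l)
    (hCC' : C ⊆ C')
    (hnew : ∀ m ∈ C' \ C, ∀ x, TransGen E m x → x ≠ a ∧ x ≠ b ∧ x ∉ C) :
    ActivePath E C' a b l := by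
  obtain ⟨hhead, hlast, hnd, hch, hcol, hncol⟩ := hl
  refine ⟨hhead, hlast, hnd, hch, fun v hv => ?_, fun v hv hvC' => ?_⟩
  · obtain ⟨d, hd, hvd⟩ := hcol v hv
    exact ⟨d, hCC' hd, hvd⟩
  · have hvnew : v ∈ C' \ C := ⟨hvC', hncol v hv⟩
    obtain ⟨c, hvc, rfl | rfl | hc⟩ := hv.exists_transGen hch hhead hlast
    · exact (hnew v hvnew c hvc).1 rfl
    · exact (hnew v hvnew c hvc).2.1 rfl
    · obtain ⟨d, hd, hcd⟩ := hcol c hc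
      exact (hnew v hvnew d (hvc.trans_left hcd)).2.2 hd

lemma DConn.mono {C C' : Set V} {a b : V} (h : DConn E C a b) (hCC' : C ⊆ C')
    (hnew : ∀ m ∈ C' \ C, ∀ x, TransGen E m x → x ≠ a ∧ x ≠ b ∧ x ∉ C) :
    DConn E C' a b :=
  let ⟨l, hl⟩ := h
  ⟨l, hl.mono hCC' hnew⟩

end Paths

theorem stmt_2_general (E : V → V → Prop) (hacyc : Acyclic E) (O S M : Set V)
    (hM : ∀ m ∈ M, ∀ x : V, Ancestor E m x → x ∉ O ∪ S ∧ (x ∈ M → x = m))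
    (Oi Oj : V) (hOi : Oi ∈ O) (hOj : Oj ∈ O)
    (W : Set V) (hW : W ⊆ O \ {Oi, Oj})
    (St Sl : Set V) (hSt : St ⊆ S ∪ M)
    (hsub : St ⊆ Sl) (hdiff : Sl \ St ⊆ M)
    (hmin : ∀ A : Set V, A ⊂ W → DConn E (A ∪ St) Oi Oj) :
    ∀ A : Set V, A ⊂ W → DConn E (A ∪ Sl) Oi Oj := by
  intro A hA
  refine (hmin A hA).mono (Set.union_subset_union_right A hsub) ?_
  rintro m ⟨hmSl, hmASt⟩ x hmx
  have hmM : m ∈ M :=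
    hdiff ⟨hmSl.resolve_left fun h => hmASt (Or.inl h), fun h => hmASt (Or.inr h)⟩
  obtain ⟨hxOS, hxM⟩ := hM m hmM x hmx.to_reflTransGen
  refine ⟨fun h => hxOS (Or.inl (h ▸ hOi)), fun h => hxOS (Or.inl (h ▸ hOj)), ?_⟩
  rintro (hxA | hxSt)
  · exact hxOS (Or.inl (hW (hA.subset hxA)).1)
  · rcases hSt hxSt with hxS | hxM'
    · exact hxOS (Or.inr hxS)
    · exact hacyc m (hxM hxM' ▸ hmx)

/-- If `W` is a minimal d-separating set for `O_i, O_j` relative to `S_t`, and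
`O_i ⊥_d O_j | W ∪ S_l`, then `W` is also minimal relative to `S_l`. -/
theorem stmt_2 (E : V → V → Prop) (hacyc : Acyclic E) (O L S M : Set V)
    (hM : ∀ m ∈ M, ∀ x : V, Ancestor E m x → x ∉ O ∪ S ∧ (x ∈ M → x = m))
    (Oi Oj : V) (hOi : Oi ∈ O) (hOj : Oj ∈ O)
    (W : Set V) (hW : W ⊆ O \ {Oi, Oj})
    (St Sl : Set V) (hSt : St ⊆ S ∪ M) (hSl : Sl ⊆ S ∪ M)
    (hsub : St ⊆ Sl) (hdiff : Sl \ St ⊆ M)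
    (hsep : DSep E (W ∪ St) Oi Oj)
    (hmin : ∀ A : Set V, A ⊂ W → DConn E (A ∪ St) Oi Oj)
    (hsepl : DSep E (W ∪ Sl) Oi Oj) :
    ∀ A : Set V, A ⊂ W → DConn E (A ∪ Sl) Oi Oj :=
  stmt_2_general E hacyc O S M hM Oi Oj hOi hOj W hW St Sl hSt hsub hdiff hmin
end

section
/- In a DAG G over X = O ∪ L ∪ S, for distinct observables O_i, O_j ∈ O the following are equivalent: (1) there is an inducing path between O_i and O_j with respect to L and S; (2) O_i and O_j are d-connected given W ∪ S for every W ⊆ O \ {O_i, O_j}. -/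
variable {V : Type*}

/-- `l` is an inducing path between `a` and `b` with respect to `L` and `S`. -/
def InducingPath (E : V → V → Prop) (L S : Set V) (a b : V) (l : List V) : Prop :=
  l.head? = some a ∧ l.getLast? = some b ∧ l.Nodup ∧
  l.Chain' (fun u v => E u v ∨ E v u) ∧
  (∀ v, ColliderOn E l v → Ancestor E v a ∨ Ancestor E v b ∨ ∃ s ∈ S, Ancestor E v s) ∧
  (∀ v, NonColliderOn E l v → v ∈ L)

/-!
On an inducing path the non-colliders are latent, so never conditioned on, and every collider
is an ancestor of `O_i`, `O_j` or `S`. A collider that is not an ancestor of the conditioning set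
`W ∪ S` is therefore an ancestor of an endpoint, and the path can be rerouted along the directed
path from it to that endpoint. Rerouting at the last such collider that is an ancestor of
`O_i`, and then symmetrically for `O_j`, gives an active walk; in a DAG, cutting the loops out
of an active walk leaves an active path.

Conversely, let `W` be the observed vertices other than `O_i, O_j` that are ancestors of
`{O_i, O_j} ∪ S`. Following an outgoing edge of a non-collider along an active path leads either
to an endpoint or to a collider, so every non-collider is an ancestor of the endpoints or of the
conditioning set. On an active path given `W ∪ S`, an observed non-collider would thus lie in `W`;
hence all non-colliders are latent, and the colliders are ancestors of `{O_i, O_j} ∪ S`.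
-/

namespace List

variable {α : Type*}

theorem triple_infix_append_cons {x u y v : α} {A B : List α} (h : [x, u, y] <:+: A ++ v :: B) :
    [x, u, y] <:+: A ++ [v] ∨ [x, u, y] <:+: v :: B ∨
      (u = v ∧ A.getLast? = some x ∧ B.head? = some y) := by
  induction A with
  | nil => exact Or.inr (Or.inl h)
  | cons a A ih =>
    rcases infix_cons_iff.1 h with ⟨t, ht⟩ | h
    · rcases A with _ | ⟨a', _ | ⟨a'', A⟩⟩ <;> simp only [cons_append, nil_append, cons.injEq] at ht
      · obtain ⟨rfl, rfl, rfl⟩ := ht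
        simp
      · obtain ⟨rfl, rfl, rfl, -⟩ := ht
        simp
      · obtain ⟨rfl, rfl, rfl, -⟩ := ht
        exact Or.inl (infix_append [] _ _)
    · rcases ih h with h | h | ⟨rfl, hx, hy⟩
      · exact Or.inl (infix_cons h)
      · exact Or.inr (Or.inl h)
      · refine Or.inr (Or.inr ⟨rfl, ?_, hy⟩)
        rw [getLast?_cons, hx]; rfl

theorem triple_infix_reverse {x u y : α} {l : List α} :
    [x, u, y] <:+: l.reverse ↔ [y, u, x] <:+: l := by
  simpa using (reverse_infix (l₁ := [y, u, x]) (l₂ := l))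

theorem exists_last_triple {p : α → α → α → Prop} {l : List α}
    (h : ∃ x u y, [x, u, y] <:+: l ∧ p x u y) :
    ∃ s x u y t, l = s ++ [x, u, y] ++ t ∧ p x u y ∧
      ∀ x' u' y', [x', u', y'] <:+: u :: y :: t → ¬ p x' u' y' := by
  induction l with
  | nil => simp at h
  | cons c l ih =>
    by_cases h' : ∃ x u y, [x, u, y] <:+: l ∧ p x u y
    · obtain ⟨s, x, u, y, t, rfl, hp, hlast⟩ := ih h'
      exact ⟨c :: s, x, u, y, t, rfl, hp, hlast⟩
    · obtain ⟨x, u, y, hxuy, hp⟩ := h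
      rcases infix_cons_iff.1 hxuy with ⟨t, ht⟩ | hl
      · simp only [cons_append, cons.injEq] at ht
        obtain ⟨rfl, rfl⟩ := ht
        exact ⟨[], x, u, y, t, rfl, hp, fun x' u' y' h'' hp' => h' ⟨x', u', y', h'', hp'⟩⟩
      · exact absurd ⟨x, u, y, hl, hp⟩ h'

theorem mem_tail_of_pair_infix {a b : α} {l : List α} (h : [a, b] <:+: l) : b ∈ l.tail := by
  obtain ⟨s, t, rfl⟩ := h
  cases s <;> simp

theorem Nodup.pair_infix_unique {x x' u : α} {l : List α} (hl : l.Nodup)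
    (h : [x, u] <:+: l) (h' : [x', u] <:+: l) : x = x' := by
  induction l with
  | nil => simp at h
  | cons c l ih =>
    have hdup : ∀ {z t}, l = u :: t → [z, u] <:+: l → False := fun {z t} hlt hz => by
      subst hlt; exact (nodup_cons.1 hl.of_cons).1 (mem_tail_of_pair_infix hz)
    rcases infix_cons_iff.1 h with ⟨t, ht⟩ | h <;> rcases infix_cons_iff.1 h' with ⟨t', ht'⟩ | h'
    · simp_all
    · simp only [cons_append, cons.injEq] at ht
      exact (hdup ht.2.symm h').elim
    · simp only [cons_append, cons.injEq] at ht'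
      exact (hdup ht'.2.symm h).elim
    · exact ih hl.of_cons h h'

theorem Nodup.triple_infix_unique {x u y x' y' : α} {l : List α} (hl : l.Nodup)
    (h : [x, u, y] <:+: l) (h' : [x', u, y'] <:+: l) : x = x' ∧ y = y' := by
  have pair_left : ∀ {a b c : α}, [a, b, c] <:+: l → [a, b] <:+: l :=
    fun h => (infix_append [] [_, _] [_]).trans h
  have pair_right : ∀ {a b c : α}, [a, b, c] <:+: l → [c, b] <:+: l.reverse :=
    fun h => (infix_append [] [_, _] [_]).trans (by simpa using reverse_infix.2 h)
  exact ⟨hl.pair_infix_unique (pair_left h) (pair_left h'),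
    (nodup_reverse.2 hl).pair_infix_unique (pair_right h) (pair_right h')⟩

theorem Nodup.ne_of_triple_infix_of_head? {a x u y : α} {l : List α} (hl : l.Nodup)
    (ha : l.head? = some a) (h : [x, u, y] <:+: l) : u ≠ a := by
  obtain ⟨l, rfl⟩ : ∃ t, l = a :: t := by cases l <;> simp_all
  rintro rfl
  exact (nodup_cons.1 hl).1 (mem_tail_of_pair_infix ((infix_append [] [_, _] [_]).trans h))

theorem Nodup.ne_of_triple_infix_of_getLast? {b x u y : α} {l : List α} (hl : l.Nodup)
    (hb : l.getLast? = some b) (h : [x, u, y] <:+: l) : u ≠ b :=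
  (nodup_reverse.2 hl).ne_of_triple_infix_of_head? (by simpa using hb) (triple_infix_reverse.2 h)

theorem exists_eq_append_cons_append_cons_of_not_nodup {l : List α} (h : ¬ l.Nodup) :
    ∃ A v B C, l = A ++ v :: B ++ v :: C := by
  obtain ⟨v, hv⟩ : ∃ v, [v, v] <+ l := by simpa [nodup_iff_sublist] using h
  obtain ⟨r₁, r₂, rfl, hv₁, hv₂⟩ := cons_sublist_iff.1 hv
  obtain ⟨A, B, rfl⟩ := append_of_mem hv₁
  obtain ⟨B', C, rfl⟩ := append_of_mem (singleton_sublist.1 hv₂)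
  exact ⟨A, v, B ++ B', C, by simp⟩

end List

theorem Acyclic.irrefl {E : V → V → Prop} (h : Acyclic E) (v : V) : ¬ E v v :=
  fun hv => h v (.single hv)

theorem Acyclic.asymm {E : V → V → Prop} (h : Acyclic E) {u v : V} (huv : E u v) : ¬ E v u :=
  fun hvu => h u (.head huv (.single hvu))

def Ancestors (E : V → V → Prop) (T : Set V) : Set V :=
  {v | ∃ t ∈ T, Ancestor E v t}

section Ancestors

variable {E : V → V → Prop} {T T' : Set V} {u v a : V}

theorem mem_ancestors_singleton : v ∈ Ancestors E {a} ↔ Ancestor E v a := by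
  simp [Ancestors]

theorem ancestors_insert : Ancestors E (insert a T) = Ancestors E {a} ∪ Ancestors E T := by
  ext v
  simp [Ancestors]

theorem subset_ancestors : T ⊆ Ancestors E T :=
  fun t ht => ⟨t, ht, .refl⟩

theorem ancestors_mono (h : T ⊆ T') : Ancestors E T ⊆ Ancestors E T' :=
  fun _ ⟨t, ht, hvt⟩ => ⟨t, h ht, hvt⟩

theorem Ancestor.mem_ancestors (huv : Ancestor E u v) (hv : v ∈ Ancestors E T) :
    u ∈ Ancestors E T :=
  let ⟨t, ht, hvt⟩ := hv; ⟨t, ht, Relation.ReflTransGen.trans huv hvt⟩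

theorem ancestors_subset_of_subset_ancestors (h : T ⊆ Ancestors E T') :
    Ancestors E T ⊆ Ancestors E T' :=
  fun _ ⟨_, ht, hvt⟩ => Ancestor.mem_ancestors hvt (h ht)

end Ancestors

section Walks

variable {E : V → V → Prop} {b : V}

theorem isChain_or_exists_collider {p u : V} {m : List V} (hpu : E p u)
    (hm : (u :: m).IsChain (fun s t => E s t ∨ E t s)) :
    (p :: u :: m).IsChain E ∨
      ∃ x z y, Ancestor E u z ∧ [x, z, y] <:+: p :: u :: m ∧ E x z ∧ E y z := by
  induction m generalizing p u with
  | nil => exact Or.inl (.cons_cons hpu (.singleton u))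
  | cons w m ih =>
    rw [List.isChain_cons_cons] at hm
    by_cases huw : E u w
    · rcases ih huw hm.2 with hchain | ⟨x, z, y, huz, hz, hxz, hyz⟩
      · exact Or.inl (.cons_cons hpu hchain)
      · exact Or.inr ⟨x, z, y, .head huw huz, List.infix_cons hz, hxz, hyz⟩
    · exact Or.inr ⟨p, u, w, .refl, List.infix_append [] _ _, hpu, hm.1.resolve_left huw⟩

theorem mem_ancestors_of_triple_forward {T : Set V} {l : List V} {x v y : V}
    (hc : l.IsChain (fun s t => E s t ∨ E t s)) (hb : l.getLast? = some b)
    (hcol : ∀ {x z y}, [x, z, y] <:+: l → E x z → E y z → z ∈ Ancestors E T)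
    (hv : [x, v, y] <:+: l) (hvy : E v y) : v ∈ Ancestors E (insert b T) := by
  obtain ⟨s, t, rfl⟩ := hv
  have hsuf : v :: y :: t <:+: s ++ [x, v, y] ++ t := ⟨s ++ [x], [], by simp⟩
  rcases isChain_or_exists_collider hvy (hc.infix ((List.suffix_cons _ _).isInfix.trans hsuf)) with
    hchain | ⟨p, z, q, hyz, hz, hpz, hqz⟩
  · refine ⟨b, Set.mem_insert _ _, List.relationReflTransGen_of_exists_isChain_cons _ hchain ?_⟩
    simpa [List.getLast?_eq_some_getLast] using hb
  · exact ancestors_mono (Set.subset_insert _ _)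
      (Ancestor.mem_ancestors (.head hvy hyz) (hcol (hz.trans hsuf) hpz hqz))

end Walks

/-- With `C = Ancestors E K` this says that the triple is active given `K`; a larger `C`
describes the walks that are rerouted into active ones. -/
def IsOpenTriple (E : V → V → Prop) (K C : Set V) (x u y : V) : Prop :=
  (E x u ∧ E y u → u ∈ C) ∧ (¬ (E x u ∧ E y u) → u ∉ K)

structure OpenWalk (E : V → V → Prop) (K C : Set V) (a b : V) (l : List V) : Prop where
  head? : l.head? = some a
  getLast? : l.getLast? = some b
  isChain : l.IsChain (fun u v => E u v ∨ E v u)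
  isOpenTriple : ∀ {x u y}, [x, u, y] <:+: l → IsOpenTriple E K C x u y

theorem IsOpenTriple.symm {E : V → V → Prop} {K C : Set V} {x u y : V}
    (h : IsOpenTriple E K C x u y) : IsOpenTriple E K C y u x :=
  ⟨fun hc => h.1 hc.symm, fun hc => h.2 fun hc' => hc hc'.symm⟩

namespace OpenWalk

variable {E : V → V → Prop} {K C : Set V} {a b : V}

theorem reverse {l : List V} (h : OpenWalk E K C a b l) : OpenWalk E K C b a l.reverse where
  head? := by simpa using h.getLast?
  getLast? := by simpa using h.head?
  isChain := List.isChain_reverse.2 (h.isChain.imp fun _ _ huv => huv.symm)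
  isOpenTriple hxuy := (h.isOpenTriple (List.triple_infix_reverse.1 hxuy)).symm

theorem of_isInfix {l m : List V} {a' b' : V} (h : OpenWalk E K C a b l) (hm : m <:+: l)
    (ha : m.head? = some a') (hb : m.getLast? = some b') : OpenWalk E K C a' b' m :=
  ⟨ha, hb, h.isChain.infix hm, fun hxuy => h.isOpenTriple (hxuy.trans hm)⟩

theorem of_append_cons_left {v : V} {A B : List V} (h : OpenWalk E K C a b (A ++ v :: B)) :
    OpenWalk E K C a v (A ++ [v]) :=
  h.of_isInfix ⟨[], B, by simp⟩ (by simpa [List.head?_append] using h.head?) (by simp)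

theorem of_append_cons_right {v : V} {A B : List V} (h : OpenWalk E K C a b (A ++ v :: B)) :
    OpenWalk E K C v b (v :: B) :=
  h.of_isInfix ⟨A, [], by simp⟩ rfl (by simpa using h.getLast?)

theorem append {v : V} {A B : List V} (h₁ : OpenWalk E K C a v (A ++ [v]))
    (h₂ : OpenWalk E K C v b (v :: B))
    (hv : ∀ x y, A.getLast? = some x → B.head? = some y → IsOpenTriple E K C x v y) :
    OpenWalk E K C a b (A ++ v :: B) where
  head? := by simpa [List.head?_append] using h₁.head?
  getLast? := by simpa using h₂.getLast?
  isChain := by simpa using h₁.isChain.append_overlap h₂.isChain (List.cons_ne_nil v [])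
  isOpenTriple hxuy := by
    rcases List.triple_infix_append_cons hxuy with h | h | ⟨rfl, hx, hy⟩
    exacts [h₁.isOpenTriple h, h₂.isOpenTriple h, hv _ _ hx hy]

end OpenWalk

section Active

variable {E : V → V → Prop} {K : Set V} {a b : V}

theorem OpenWalk.activePath {l : List V} (h : OpenWalk E K (Ancestors E K) a b l)
    (hl : l.Nodup) : ActivePath E K a b l :=
  ⟨h.head?, h.getLast?, hl, h.isChain,
    fun _ ⟨_, _, hxvy, hxv, hyv⟩ => (h.isOpenTriple hxvy).1 ⟨hxv, hyv⟩,
    fun _ ⟨⟨x, y, hxvy⟩, hnc⟩ => (h.isOpenTriple hxvy).2 fun hc => hnc ⟨x, y, hxvy, hc⟩⟩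

/-- A collider at `v` is an ancestor of a collider on the loop, since the loop is not a
directed cycle. -/
theorem isOpenTriple_of_loop (hacyc : Acyclic E) {x v y : V} {B : List V}
    (h : OpenWalk E K (Ancestors E K) x y (x :: v :: (B ++ [v, y]))) :
    IsOpenTriple E K (Ancestors E K) x v y := by
  rcases B with _ | ⟨w, B⟩
  · have hvv := (List.isChain_cons_cons.1 (List.isChain_cons_cons.1 h.isChain).2).1
    exact (hvv.elim (hacyc.irrefl v) (hacyc.irrefl v)).elim
  obtain ⟨P, p, hP⟩ : ∃ P p, w :: B = P ++ [p] := (List.eq_nil_or_concat' _).resolve_left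
    (List.cons_ne_nil _ _)
  have hpvy_infix : [p, v, y] <:+: x :: v :: (w :: B ++ [v, y]) :=
    ⟨x :: v :: P, [], by rw [hP]; simp⟩
  have hloop : v :: w :: (B ++ [v]) <:+: x :: v :: (w :: B ++ [v, y]) := ⟨[x], [y], by simp⟩
  have hxvw : IsOpenTriple E K (Ancestors E K) x v w := h.isOpenTriple ⟨[], B ++ [v, y], by simp⟩
  have hpvy : IsOpenTriple E K (Ancestors E K) p v y := h.isOpenTriple hpvy_infix
  have hvw_adj := (List.isChain_cons_cons.1 (h.isChain.infix hloop)).1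
  have hvy_adj :=
    (List.isChain_cons_cons.1 (List.isChain_cons_cons.1 (h.isChain.infix hpvy_infix)).2).1
  refine ⟨fun ⟨hxv, hyv⟩ => ?_, fun hnc => ?_⟩
  · by_cases hwv : E w v
    · exact hxvw.1 ⟨hxv, hwv⟩
    have hvw : E v w := hvw_adj.resolve_right hwv
    rcases isChain_or_exists_collider hvw
        ((h.isChain.infix hloop).infix (List.suffix_cons _ _).isInfix) with
      hcycle | ⟨x', z, y', hwz, hz, hx'z, hy'z⟩
    · refine (hacyc v (.head' hvw ?_)).elim
      exact List.relationReflTransGen_of_exists_isChain_cons _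
        (List.isChain_cons_cons.1 hcycle).2 (by simp)
    · exact Ancestor.mem_ancestors (.head hvw hwz)
        ((h.isOpenTriple (hz.trans hloop)).1 ⟨hx'z, hy'z⟩)
  · by_cases hxv : E x v
    · have hvy : E v y := hvy_adj.resolve_right fun hyv => hnc ⟨hxv, hyv⟩
      exact hpvy.2 fun hc => hacyc.asymm hvy hc.2
    · exact hxvw.2 fun hc => hxv hc.1

theorem OpenWalk.shortcut (hacyc : Acyclic E) {v : V} {A B C : List V}
    (h : OpenWalk E K (Ancestors E K) a b (A ++ v :: B ++ v :: C)) :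
    OpenWalk E K (Ancestors E K) a b (A ++ v :: C) := by
  have h' : OpenWalk E K (Ancestors E K) a b (A ++ v :: (B ++ v :: C)) := by simpa using h
  refine h'.of_append_cons_left.append h.of_append_cons_right fun x y hx hy =>
    isOpenTriple_of_loop (B := B) hacyc (h.of_isInfix ?_ rfl (by simp [List.getLast?_cons]))
  obtain ⟨A, rfl⟩ := List.getLast?_eq_some_iff.1 hx
  obtain ⟨C, rfl⟩ : ∃ C', C = y :: C' := by cases C <;> simp_all
  exact ⟨A, C, by simp⟩

theorem OpenWalk.dConn (hacyc : Acyclic E) {l : List V}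
    (h : OpenWalk E K (Ancestors E K) a b l) : DConn E K a b := by
  by_cases hl : l.Nodup
  · exact ⟨l, h.activePath hl⟩
  · obtain ⟨A, v, B, C, rfl⟩ := List.exists_eq_append_cons_append_cons_of_not_nodup hl
    exact (h.shortcut hacyc).dConn hacyc
termination_by l.length
decreasing_by simp_all

end Active

section Reroute

variable {E : V → V → Prop} {K C : Set V} {a b : V}

theorem OpenWalk.of_colliders_mem {T : Set V} {l : List V} (h : OpenWalk E K C a b l)
    (hT : ∀ {x u y}, [x, u, y] <:+: l → ¬ (E x u ∧ E y u ∧ u ∉ T)) : OpenWalk E K T a b l :=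
  ⟨h.head?, h.getLast?, h.isChain, fun hxuy =>
    ⟨fun hc => by_contra fun hu => hT hxuy ⟨hc.1, hc.2, hu⟩, (h.isOpenTriple hxuy).2⟩⟩

theorem exists_openWalk_of_ancestor (hacyc : Acyclic E) {u t : V} (hut : Ancestor E u t)
    (hu : u ∉ Ancestors E K) :
    ∃ D, OpenWalk E K C u t (u :: D) ∧ ∀ r, D.head? = some r → E u r := by
  obtain ⟨D, hD, hlast⟩ := List.exists_isChain_cons_of_relationReflTransGen hut
  have hdesc : ∀ z ∈ u :: D, Ancestor E u z :=
    hD.induction _ _ (fun _ _ hzw huz => huz.tail hzw) fun _ => .refl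
  refine ⟨D, ⟨rfl, by simp [List.getLast?_eq_some_getLast, hlast], hD.imp fun _ _ => .inl,
    fun {x z y} hxzy => ?_⟩, fun r hr => ?_⟩
  · have hzy := (List.isChain_cons_cons.1 (List.isChain_cons_cons.1 (hD.infix hxzy)).2).1
    refine ⟨fun hc => (hacyc.asymm hzy hc.2).elim, fun _ hzK => hu ?_⟩
    exact Ancestor.mem_ancestors (hdesc z (hxzy.subset (by simp))) (subset_ancestors hzK)
  · obtain ⟨D, rfl⟩ : ∃ D', D = r :: D' := by cases D <;> simp_all
    exact (List.isChain_cons_cons.1 hD).1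

/-- Reroute at the last collider outside `T`: it is an ancestor of `a`, so the walk up to it
can be replaced by the reversed directed path to `a`, and no collider outside `T` remains. -/
theorem OpenWalk.exists_of_ancestors_head (hacyc : Acyclic E) {T : Set V}
    (hT : Ancestors E K ⊆ T) {l : List V} (h : OpenWalk E K (Ancestors E {a} ∪ T) a b l) :
    ∃ m, OpenWalk E K T a b m := by
  by_cases hbad : ∃ x u y, [x, u, y] <:+: l ∧ (E x u ∧ E y u ∧ u ∉ T)
  swap
  · exact ⟨l, h.of_colliders_mem fun hxuy hc => hbad ⟨_, _, _, hxuy, hc⟩⟩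
  obtain ⟨s, x, u, y, t, rfl, ⟨hxu, hyu, huT⟩, hlast⟩ := List.exists_last_triple hbad
  have hua : Ancestor E u a := mem_ancestors_singleton.1
    (((h.isOpenTriple ⟨s, t, rfl⟩).1 ⟨hxu, hyu⟩).resolve_right huT)
  have huK : u ∉ Ancestors E K := fun hu => huT (hT hu)
  obtain ⟨D, hD, hDu⟩ := exists_openWalk_of_ancestor (C := T) hacyc hua huK
  have htail : OpenWalk E K (Ancestors E {a} ∪ T) u b (u :: y :: t) :=
    (show s ++ [x, u, y] ++ t = (s ++ [x]) ++ u :: y :: t by simp) ▸ h |>.of_append_cons_right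
  refine ⟨D.reverse ++ u :: y :: t, (by simpa using hD.reverse : OpenWalk E K T a u _).append
    (htail.of_colliders_mem fun hxuy => hlast _ _ _ hxuy) fun r _ hr _ => ?_⟩
  have hur : E u r := hDu r (by simpa using hr)
  exact ⟨fun hc => (hacyc.asymm hur hc.1).elim, fun _ hu => huK (subset_ancestors hu)⟩

theorem OpenWalk.exists_activeWalk (hacyc : Acyclic E) {l : List V}
    (h : OpenWalk E K (Ancestors E (insert a (insert b K))) a b l) :
    ∃ m, OpenWalk E K (Ancestors E K) a b m := by
  rw [ancestors_insert] at h
  obtain ⟨m, hm⟩ := h.exists_of_ancestors_head hacyc (ancestors_mono (Set.subset_insert _ _))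
  have hm' := hm.reverse
  rw [ancestors_insert] at hm'
  obtain ⟨m', hm'⟩ := hm'.exists_of_ancestors_head hacyc subset_rfl
  exact ⟨_, hm'.reverse⟩

end Reroute

section InducingPaths

variable {E : V → V → Prop} {a b : V} {l : List V}

theorem InducingPath.openWalk {L S K : Set V} (h : InducingPath E L S a b l)
    (hLK : Disjoint L K) (hSK : S ⊆ K) :
    OpenWalk E K (Ancestors E (insert a (insert b K))) a b l := by
  obtain ⟨hhead, hlast, hnd, hc, hcol, hnc⟩ := h
  refine ⟨hhead, hlast, hc, fun {x u y} hxuy => ⟨fun hxyu => ?_, fun hxyu => ?_⟩⟩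
  · rcases hcol u ⟨x, y, hxuy, hxyu⟩ with hua | hub | ⟨s, hs, hus⟩
    exacts [⟨a, by simp, hua⟩, ⟨b, by simp, hub⟩, ⟨s, by simp [hSK hs], hus⟩]
  · refine Set.disjoint_left.1 hLK (hnc u ⟨⟨x, y, hxuy⟩, fun ⟨x', y', hxuy', hx'u, hy'u⟩ => ?_⟩)
    obtain ⟨rfl, rfl⟩ := hnd.triple_infix_unique hxuy hxuy'
    exact hxyu ⟨hx'u, hy'u⟩

theorem ActivePath.mem_ancestors_of_nonColliderOn {C : Set V} {v : V}
    (h : ActivePath E C a b l) (hv : NonColliderOn E l v) :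
    v ∈ Ancestors E (insert a (insert b C)) := by
  obtain ⟨hhead, hlast, -, hc, hcol, -⟩ := h
  obtain ⟨⟨x, y, hxvy⟩, hnc⟩ := hv
  have hcol' : ∀ {x z y}, [x, z, y] <:+: l → E x z → E y z → z ∈ Ancestors E C :=
    fun hxzy hxz hyz => hcol _ ⟨_, _, hxzy, hxz, hyz⟩
  have hxv := (List.isChain_cons_cons.1 (hc.infix hxvy)).1
  have hvy := (List.isChain_cons_cons.1 (List.isChain_cons_cons.1 (hc.infix hxvy)).2).1
  by_cases hvy' : E v y
  · exact ancestors_mono (Set.subset_insert _ _)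
      (mem_ancestors_of_triple_forward hc hlast hcol' hxvy hvy')
  · have hvx : E v x := hxv.resolve_left fun hxv => hnc ⟨x, y, hxvy, hxv, hvy.resolve_left hvy'⟩
    refine ancestors_mono (Set.insert_subset_insert (Set.subset_insert _ _))
      (mem_ancestors_of_triple_forward (l := l.reverse)
        (List.isChain_reverse.2 (hc.imp fun _ _ huv => huv.symm)) (by simpa using hhead)
        (fun hxzy hxz hyz => hcol' (List.triple_infix_reverse.1 hxzy) hyz hxz)
        (List.triple_infix_reverse.2 hxvy) hvx)

theorem ActivePath.inducingPath {O L S : Set V} (hcov : ∀ v : V, v ∈ O ∪ L ∪ S)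
    (h : ActivePath E ((O \ {a, b}) ∩ Ancestors E (insert a (insert b S)) ∪ S) a b l) :
    InducingPath E L S a b l := by
  set W := (O \ {a, b}) ∩ Ancestors E (insert a (insert b S))
  have hanc :
      Ancestors E (insert a (insert b (W ∪ S))) ⊆ Ancestors E (insert a (insert b S)) := by
    refine ancestors_subset_of_subset_ancestors (Set.insert_subset ?_ (Set.insert_subset ?_ ?_))
    · exact subset_ancestors (Set.mem_insert _ _)
    · exact subset_ancestors (by simp)
    · exact Set.union_subset Set.inter_subset_right <| subset_ancestors.trans <|
        ancestors_mono ((Set.subset_insert _ _).trans (Set.subset_insert _ _))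
  obtain ⟨hhead, hlast, hnd, hc, hcol, hnc⟩ := id h
  refine ⟨hhead, hlast, hnd, hc, fun v hv => ?_, fun v hv => ?_⟩
  · obtain ⟨d, hd, hvd⟩ := hcol v hv
    simpa [Ancestors] using hanc ⟨d, by simp [hd], hvd⟩
  · have hvK : v ∉ W ∪ S := hnc v hv
    rcases hcov v with (hvO | hvL) | hvS
    · obtain ⟨x, y, hxvy⟩ := hv.1
      refine (hvK (Or.inl ⟨⟨hvO, ?_⟩, hanc (h.mem_ancestors_of_nonColliderOn hv)⟩)).elim
      simp [hnd.ne_of_triple_infix_of_head? hhead hxvy,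
        hnd.ne_of_triple_infix_of_getLast? hlast hxvy]
    · exact hvL
    · exact (hvK (Or.inr hvS)).elim

end InducingPaths

theorem stmt_4_general (E : V → V → Prop) (hacyc : Acyclic E) (O L S : Set V)
    (hcov : ∀ v : V, v ∈ O ∪ L ∪ S)
    (hOL : Disjoint O L) (hLS : Disjoint L S)
    (Oi Oj : V) :
    (∃ l : List V, InducingPath E L S Oi Oj l) ↔
      (∀ W : Set V, W ⊆ O \ {Oi, Oj} → DConn E (W ∪ S) Oi Oj) := by
  constructor
  · rintro ⟨l, hl⟩ W hW
    have hLK : Disjoint L (W ∪ S) :=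
      Set.disjoint_union_right.2 ⟨(hOL.mono_left (hW.trans Set.sdiff_subset)).symm, hLS⟩
    obtain ⟨m, hm⟩ := (hl.openWalk hLK Set.subset_union_right).exists_activeWalk hacyc
    exact hm.dConn hacyc
  · intro h
    obtain ⟨l, hl⟩ := h _ Set.inter_subset_left
    exact ⟨l, hl.inducingPath hcov⟩

/-- There is an inducing path between `O_i` and `O_j` w.r.t. `L` and `S` iff `O_i` and `O_j`
are d-connected given `W ∪ S` for every `W ⊆ O \ {O_i, O_j}`. -/
theorem stmt_4 (E : V → V → Prop) (hacyc : Acyclic E) (O L S : Set V)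
    (hcov : ∀ v : V, v ∈ O ∪ L ∪ S)
    (hOL : Disjoint O L) (hOS : Disjoint O S) (hLS : Disjoint L S)
    (Oi Oj : V) (hOi : Oi ∈ O) (hOj : Oj ∈ O) (hne : Oi ≠ Oj) :
    (∃ l : List V, InducingPath E L S Oi Oj l) ↔
      (∀ W : Set V, W ⊆ O \ {Oi, Oj} → DConn E (W ∪ S) Oi Oj) :=
  stmt_4_general E hacyc O L S hcov hOL hLS Oi Oj
end

section
/- Let G be a DAG, A and B distinct vertices, and C a minimal set d-separating A and B (A ⊥_d B | C, but A and B are d-connected given every proper subset of C). Then every vertex of C is an ancestor of A or of B. -/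
variable {V : Type*}

/-!
Let `C'` be the part of `C` consisting of ancestors of `A` or `B`. A path active given `C'` is
already active given `C`: its colliders keep their descendants in `C' ⊆ C`, and each
non-collider `v` has an outgoing path edge; following the path in that direction along edges
pointing forward, one reaches either an endpoint or a collider, so `v` is an ancestor of `A`,
of `B`, or of some vertex of `C'`, hence of `A` or `B`, and thus `v ∉ C \ C'`. So if some
`c ∈ C` were not an ancestor of `A` or `B`, then `C' ⊂ C` would still d-separate `A` and `B`.
-/

section Paths

variable {E : V → V → Prop}

theorem ColliderOn.of_infix {l m : List V} {v : V} (hv : ColliderOn E m v) (h : m <:+: l) :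
    ColliderOn E l v := by
  obtain ⟨x, y, hxy, hx, hy⟩ := hv
  exact ⟨x, y, hxy.trans h, hx, hy⟩

theorem colliderOn_reverse {l : List V} {v : V} :
    ColliderOn E l.reverse v ↔ ColliderOn E l v := by
  constructor
  · rintro ⟨x, y, hxy, hx, hy⟩
    exact ⟨y, x, by simpa using hxy.reverse, hy, hx⟩
  · rintro ⟨x, y, hxy, hx, hy⟩
    exact ⟨y, x, by simpa using hxy.reverse, hy, hx⟩

theorem exists_ancestor_getLast_or_colliderOn_of_chain {l : List V} {v u : V} (hvu : E v u)
    (hch : (v :: u :: l).IsChain (fun a b => E a b ∨ E b a)) :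
    ∃ w, Ancestor E v w ∧ ((v :: u :: l).getLast? = some w ∨ ColliderOn E (v :: u :: l) w) := by
  induction l generalizing v u with
  | nil => exact ⟨u, .single hvu, .inl rfl⟩
  | cons z l ih =>
    have hch' := (List.isChain_cons_cons.mp hch).2
    rcases (List.isChain_cons_cons.mp hch').1 with huz | hzu
    · obtain ⟨w, huw, hw⟩ := ih huz hch'
      refine ⟨w, .head hvu huw, ?_⟩
      rcases hw with hw | hw
      · exact .inl (by simpa [List.getLast?_cons_cons] using hw)
      · exact .inr (hw.of_infix (List.suffix_cons v _).isInfix)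
    · exact ⟨u, .single hvu, .inr ⟨v, z, ⟨[], l, rfl⟩, hvu, hzu⟩⟩

theorem exists_ancestor_getLast_or_colliderOn_of_suffix {l t : List V} {v u : V} (hvu : E v u)
    (hch : l.IsChain (fun a b => E a b ∨ E b a)) (hsuf : v :: u :: t <:+ l) :
    ∃ w, Ancestor E v w ∧ (l.getLast? = some w ∨ ColliderOn E l w) := by
  obtain ⟨w, hvw, hw⟩ := exists_ancestor_getLast_or_colliderOn_of_chain hvu (hch.suffix hsuf)
  refine ⟨w, hvw, hw.imp (fun hlast => ?_) (fun hcol => hcol.of_infix hsuf.isInfix)⟩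
  obtain ⟨s, rfl⟩ := hsuf
  rwa [List.getLast?_append_of_ne_nil _ (List.cons_ne_nil _ _)]

theorem NonColliderOn.exists_ancestor {l : List V} {v : V} (hv : NonColliderOn E l v)
    (hch : l.IsChain (fun a b => E a b ∨ E b a)) :
    ∃ w, Ancestor E v w ∧ (l.head? = some w ∨ l.getLast? = some w ∨ ColliderOn E l w) := by
  obtain ⟨⟨x, y, s, t, hst⟩, hnc⟩ := hv
  have hxvy : (E x v ∨ E v x) ∧ (E v y ∨ E y v) := by
    simpa using hch.infix ⟨s, t, hst⟩
  have houtgoing : E v y ∨ E v x := by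
    by_contra! h
    exact hnc ⟨x, y, ⟨s, t, hst⟩, hxvy.1.resolve_right h.2, hxvy.2.resolve_left h.1⟩
  rcases houtgoing with hvy | hvx
  · obtain ⟨w, hvw, hw⟩ := exists_ancestor_getLast_or_colliderOn_of_suffix hvy hch
      (t := t) ⟨s ++ [x], by simpa using hst⟩
    exact ⟨w, hvw, .inr hw⟩
  · have hch_rev : l.reverse.IsChain (fun a b => E a b ∨ E b a) :=
      List.isChain_reverse.mpr (hch.imp fun _ _ h => h.symm)
    obtain ⟨w, hvw, hw⟩ := exists_ancestor_getLast_or_colliderOn_of_suffix hvx hch_rev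
      (t := s.reverse) ⟨t.reverse ++ [y], by simp [← hst]⟩
    rw [List.getLast?_reverse, colliderOn_reverse] at hw
    exact ⟨w, hvw, hw.imp_right .inr⟩

theorem ActivePath.ancestor_of_nonColliderOn {C : Set V} {a b : V} {l : List V}
    (hl : ActivePath E C a b l) {v : V} (hv : NonColliderOn E l v) :
    Ancestor E v a ∨ Ancestor E v b ∨ ∃ d ∈ C, Ancestor E v d := by
  obtain ⟨hhead, hlast, -, hch, hcol, -⟩ := hl
  obtain ⟨w, hvw, hw⟩ := hv.exists_ancestor hch
  rw [hhead, hlast, Option.some_inj, Option.some_inj] at hw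
  rcases hw with rfl | rfl | hw
  · exact .inl hvw
  · exact .inr (.inl hvw)
  · obtain ⟨d, hd, hwd⟩ := hcol w hw
    exact .inr (.inr ⟨d, hd, hvw.trans hwd⟩)

theorem ActivePath.of_inter_ancestors {C : Set V} {a b : V} {l : List V}
    (hl : ActivePath E (C ∩ {v | Ancestor E v a ∨ Ancestor E v b}) a b l) :
    ActivePath E C a b l := by
  have hnc := @hl.ancestor_of_nonColliderOn
  obtain ⟨hhead, hlast, hnodup, hch, hcol, hnoncol⟩ := hl
  refine ⟨hhead, hlast, hnodup, hch, fun w hw => ?_, fun v hv hvC => hnoncol v hv ⟨hvC, ?_⟩⟩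
  · obtain ⟨d, hd, hwd⟩ := hcol w hw
    exact ⟨d, hd.1, hwd⟩
  · rcases hnc hv with hva | hvb | ⟨d, hd, hvd⟩
    · exact .inl hva
    · exact .inr hvb
    · exact hd.2.imp hvd.trans hvd.trans

theorem DConn.of_inter_ancestors {C : Set V} {a b : V}
    (h : DConn E (C ∩ {v | Ancestor E v a ∨ Ancestor E v b}) a b) : DConn E C a b :=
  let ⟨l, hl⟩ := h
  ⟨l, hl.of_inter_ancestors⟩

end Paths

theorem stmt_5_general (E : V → V → Prop) (A B : V) (C : Set V)
    (hsep : DSep E C A B)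
    (hmin : ∀ C' : Set V, C' ⊂ C → DConn E C' A B) :
    ∀ c ∈ C, Ancestor E c A ∨ Ancestor E c B := by
  intro c hc
  by_contra hc_anc
  have hssubset : C ∩ {v | Ancestor E v A ∨ Ancestor E v B} ⊂ C :=
    ⟨Set.inter_subset_left, fun hsub => hc_anc (hsub hc).2⟩
  exact hsep (hmin _ hssubset).of_inter_ancestors

/-- Every vertex of a minimal d-separating set for `A` and `B` is an ancestor of `A` or of `B`. -/
theorem stmt_5 (E : V → V → Prop) (hacyc : Acyclic E) (A B : V) (C : Set V)
    (hne : A ≠ B) (hA : A ∉ C) (hB : B ∉ C)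
    (hsep : DSep E C A B)
    (hmin : ∀ C' : Set V, C' ⊂ C → DConn E C' A B) :
    ∀ c ∈ C, Ancestor E c A ∨ Ancestor E c B :=
  stmt_5_general E A B C hsep hmin
end
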